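/- arXiv:1501.06353 — 2 statements merged into one kernel-verified Lean document; each statement's English description precedes it below -/
import Mathlib

section
/- (Sub-claim in the proof of Theorem B.1 of the paper.) Let W ⊆ V with |W| ≥ 2 be such that some vertex of W is reachable in D[W] from every other vertex of W, let i ∈ W, let j ∈ V ∖ W with (j, i) ∈ A, and let x ∈ ℕ. If i is cycle-partitioning at order x with respect to {j} and W ∖ {i}, but i is NOT dynamically partitioning with respect to {j} and W ∖ {i}, then there exists U ⊆ V with i, j ∈ U, U ∩ (W ∖ {i}) ≠ ∅, and |U| ≥ x + 3, such that D[U] is a directed sub-block. -/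
open Set

variable {V : Type*}

/-- One arc step within the induced subgraph on the vertex set `S`. -/
def StepIn (A : V → V → Prop) (S : Set V) (u v : V) : Prop :=
  u ∈ S ∧ v ∈ S ∧ A u v

/-- `v` is reachable from `u` by a directed path in the induced subgraph on `S`
(every vertex is reachable from itself, provided it lies in `S`). -/
def ReachIn (A : V → V → Prop) (S : Set V) (u v : V) : Prop :=
  u ∈ S ∧ Relation.ReflTransGen (StepIn A S) u v

/-- `IN(X)`: the set of vertices from which some member of `X` is reachable,
computed in the induced subgraph on `S`. -/
def InSet (A : V → V → Prop) (S : Set V) (X : Set V) : Set V :=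
  {u | ∃ x ∈ X, ReachIn A S u x}

/-- `Z` is dynamically partitioning with respect to `X` and `Y`:
`IN(X) ∩ IN(Y) = ∅` computed in the induced subgraph `D − Z`. -/
def DynPart (A : V → V → Prop) (X Y Z : Set V) : Prop :=
  InSet A Zᶜ X ∩ InSet A Zᶜ Y = ∅

/-- `StepsLe r n u v`: `v` can be reached from `u` in at most `n` `r`-steps. -/
def StepsLe (r : V → V → Prop) : ℕ → V → V → Prop
  | 0, u, v => u = v
  | n + 1, u, v => u = v ∨ ∃ w, r u w ∧ StepsLe r n w v

/-- `v` is reachable from `u` by a directed path using at most `n` arcs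
in the induced subgraph on `S`. -/
def ReachInLe (A : V → V → Prop) (S : Set V) (n : ℕ) (u v : V) : Prop :=
  u ∈ S ∧ StepsLe (StepIn A S) n u v

/-- `IN_a(X)` computed in the induced subgraph on `S`. -/
def InSetLe (A : V → V → Prop) (S : Set V) (a : ℕ) (X : Set V) : Set V :=
  {u | ∃ x ∈ X, ReachInLe A S a u x}

/-- The vertex `i` is cycle-partitioning at order `x` with respect to `X` and `Y`:
`IN_a(X) ∩ IN_b(Y) = ∅` in `D − {i}` for all `a + b = x`. -/
def CyclePart (A : V → V → Prop) (X Y : Set V) (i : V) (x : ℕ) : Prop :=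
  ∀ a b : ℕ, a + b = x → InSetLe A {i}ᶜ a X ∩ InSetLe A {i}ᶜ b Y = ∅

/-- One adjacency step of the underlying (simple) graph of `D[W]`. -/
def UStep (A : V → V → Prop) (W : Set V) (u v : V) : Prop :=
  u ∈ W ∧ v ∈ W ∧ u ≠ v ∧ (A u v ∨ A v u)

/-- The underlying graph of `D[W]` is connected. -/
def UConnected (A : V → V → Prop) (W : Set V) : Prop :=
  W.Nonempty ∧ ∀ u ∈ W, ∀ v ∈ W, Relation.ReflTransGen (UStep A W) u v

/-- The underlying graph of `D[W]` is biconnected: at least 3 vertices, connected,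
and deleting any single vertex leaves a connected graph. -/
def Biconnected (A : V → V → Prop) (W : Set V) : Prop :=
  3 ≤ W.ncard ∧ UConnected A W ∧ ∀ v ∈ W, UConnected A (W \ {v})

/-- `D[W]` is a directed sub-block: some vertex of `W` is reachable in `D[W]` from
every other vertex of `W`, and the underlying graph of `D[W]` is biconnected. -/
def DirectedSubBlock (A : V → V → Prop) (W : Set V) : Prop :=
  (∃ i ∈ W, ∀ j ∈ W, ReachIn A W j i) ∧ Biconnected A W

/-- A directed sub-block is a transmission block iff it is maximal. -/
def TransmissionBlock (A : V → V → Prop) (W : Set V) : Prop :=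
  DirectedSubBlock A W ∧ ∀ U : Set V, W ⊂ U → ¬ DirectedSubBlock A U

/-- A connected pair: a two-element set `{i, j}` with an arc between `i` and `j`. -/
def ConnectedPair (A : V → V → Prop) (W : Set V) : Prop :=
  ∃ i j : V, i ≠ j ∧ W = {i, j} ∧ (A i j ∨ A j i)

/-- `W'` is obtained from `W` by one exact generation step. -/
def ExactStep (A : V → V → Prop) (W W' : Set V) : Prop :=
  ∃ k, k ∉ W ∧ W' = W ∪ {k} ∧ ∃ j ∈ W, A k j ∧ ¬ DynPart A {k} (W \ {j}) {j}

/-- `W` is the last term of a finite chain of exact generation steps whose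
first term is a connected pair. -/
def GeneratedFromPair (A : V → V → Prop) (W : Set V) : Prop :=
  ∃ P : Set V, ConnectedPair A P ∧ Relation.ReflTransGen (ExactStep A) P W

/-- `W'` is obtained from `W` by one order-`x` cycle generation step. -/
def CycleStep (A : V → V → Prop) (x : ℕ) (W W' : Set V) : Prop :=
  ∃ k, k ∉ W ∧ W' = W ∪ {k} ∧ ∃ j ∈ W, A k j ∧ ¬ CyclePart A {k} (W \ {j}) j x

/-- `W` is the last term of a finite chain of order-`x` cycle generation steps
whose first term is a connected pair. -/
def XGenerable (A : V → V → Prop) (x : ℕ) (W : Set V) : Prop :=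
  ∃ P : Set V, ConnectedPair A P ∧ Relation.ReflTransGen (CycleStep A x) P W

/-! A vertex `u` of `D − i` that reaches both `j` and `W \ {i}` (it exists because `i` is not
dynamically partitioning) is chosen together with walks `P : u ⇝ j` and `Q : u ⇝ w ∈ W \ {i}` of
minimal total length. Minimality makes `P` and `Q` paths that meet only in `u`, with `Q` meeting
`W \ {i}` only in `w` and `P` only in `u`; since `i` is cycle-partitioning at order `x`, the two
paths have at least `x + 1` arcs together. Inside `D[W]`, a shortest walk from `w` to the set of
vertices reachable from `i` ends in some `m`, and together with a path `i ⇝ m` it gives a path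
from `i` to `w` in which every vertex reaches `m`. Closing up with `Q`, `P` and the arc `j → i`
yields a cycle of the underlying graph on at least `x + 3` vertices: a biconnected vertex set in
which every vertex reaches `m`. -/

open Relation

lemma List.nodup_append_tail {l₁ l₂ : List V} {b : V} (h₁ : l₁.Nodup) (h₂ : l₂.Nodup)
    (hb : l₂.head? = some b) (H : ∀ z ∈ l₁, z ∈ l₂ → z = b) : (l₁ ++ l₂.tail).Nodup := by
  match l₂, hb with
  | b :: t, rfl =>
    rw [List.nodup_cons] at h₂
    refine List.nodup_append.mpr ⟨h₁, h₂.2, fun z hz y hy hzy => ?_⟩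
    subst hzy
    exact h₂.1 (H z hz (List.mem_cons_of_mem _ hy) ▸ hy)

lemma List.mem_append_tail_iff {l₁ l₂ : List V} {b z : V} (hb : l₂.head? = some b)
    (hb₁ : b ∈ l₁) : z ∈ l₁ ++ l₂.tail ↔ z ∈ l₁ ∨ z ∈ l₂ :=
  match l₂, hb with
  | _ :: _, rfl => by simp only [List.tail_cons, List.mem_append, List.mem_cons]; grind

lemma List.Nodup.ncard_setOf_mem {l : List V} (hl : l.Nodup) : {y | y ∈ l}.ncard = l.length := by
  classical
  rw [← List.coe_toFinset, Set.ncard_coe_finset, List.toFinset_card_of_nodup hl]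

lemma stepsLe_refl (r : V → V → Prop) (a : V) : ∀ n, StepsLe r n a a
  | 0 => rfl
  | _ + 1 => Or.inl rfl

lemma reflTransGen_stepIn_mono {A : V → V → Prop} {S T : Set V} {a b : V} (hST : S ⊆ T)
    (h : ReflTransGen (StepIn A S) a b) : ReflTransGen (StepIn A T) a b :=
  Relation.ReflTransGen.mono (fun _ _ hxy => ⟨hST hxy.1, hST hxy.2.1, hxy.2.2⟩) _ _ h

def IsWalk (r : V → V → Prop) (a b : V) (l : List V) : Prop :=
  l.IsChain r ∧ l.head? = some a ∧ l.getLast? = some b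

namespace IsWalk

variable {A r s : V → V → Prop} {S U : Set V} {a b c z : V} {l l₁ l₂ : List V}

lemma ne_nil (h : IsWalk r a b l) : l ≠ [] := by
  rintro rfl; simp [IsWalk] at h

lemma length_pos (h : IsWalk r a b l) : 0 < l.length :=
  List.length_pos_iff.mpr h.ne_nil

lemma head_mem (h : IsWalk r a b l) : a ∈ l := List.mem_of_mem_head? h.2.1

lemma last_mem (h : IsWalk r a b l) : b ∈ l := List.mem_of_mem_getLast? h.2.2

lemma _root_.isWalk_singleton : IsWalk r a b [c] ↔ a = c ∧ b = c := by
  simp [IsWalk, eq_comm]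

lemma two_le_length (h : IsWalk r a b l) (hab : a ≠ b) : 2 ≤ l.length := by
  obtain ⟨-, ha, hb⟩ := h
  match l with
  | [] | [_] => simp_all
  | _ :: _ :: _ => simp

lemma imp_of_mem (h : IsWalk r a b l) (H : ∀ x y, x ∈ l → y ∈ l → r x y → s x y) :
    IsWalk s a b l :=
  ⟨h.1.imp_of_mem_imp H, h.2⟩

lemma reverse (h : IsWalk r a b l) : IsWalk (fun x y => r y x) b a l.reverse :=
  ⟨List.isChain_reverse.mpr h.1, by simpa using h.2.2, by simpa using h.2.1⟩

lemma append (h₁ : IsWalk r a b l₁) (h₂ : IsWalk r b c l₂) : IsWalk r a c (l₁ ++ l₂.tail) := by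
  obtain ⟨hc₁, ha, hb⟩ := h₁
  obtain ⟨hc₂, hb', hc⟩ := h₂
  match l₂, hb' with
  | b :: t, rfl =>
    refine ⟨hc₁.append (List.isChain_cons.mp hc₂).2 ?_, ?_, ?_⟩
    · simpa [hb] using (List.isChain_cons.mp hc₂).1
    · cases l₁ <;> simp_all
    · cases t <;> simp_all [List.getLast?_append]

lemma split (h : IsWalk r a b (l₁ ++ z :: l₂)) :
    IsWalk r a z (l₁ ++ [z]) ∧ IsWalk r z b (z :: l₂) := by
  obtain ⟨hc, ha, hb⟩ := h
  refine ⟨⟨hc.prefix ⟨l₂, by simp⟩, ?_, by simp⟩, ⟨hc.suffix ⟨l₁, rfl⟩, rfl, ?_⟩⟩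
  · cases l₁ <;> simp_all
  · simpa [List.getLast?_append] using hb

lemma reflTransGen (h : IsWalk r a b l) : ReflTransGen r a b := by
  obtain ⟨hc, ha, hb⟩ := h
  have hne : l ≠ [] := by rintro rfl; simp at ha
  rw [List.head?_eq_some_head hne, Option.some_inj] at ha
  rw [List.getLast?_eq_some_getLast hne, Option.some_inj] at hb
  exact ha ▸ hb ▸ List.relationReflTransGen_of_exists_isChain l hc hne

lemma _root_.Relation.ReflTransGen.exists_isWalk (h : ReflTransGen r a b) :
    ∃ l, IsWalk r a b l := by
  obtain ⟨l, hne, hc, ha, hb⟩ := List.exists_isChain_ne_nil_of_relationReflTransGen h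
  exact ⟨l, hc, by rw [List.head?_eq_some_head hne, ha],
    by rw [List.getLast?_eq_some_getLast hne, hb]⟩

lemma reflTransGen_mem_last (h : IsWalk r a b l) (hz : z ∈ l) : ReflTransGen r z b := by
  obtain ⟨l₁, l₂, rfl⟩ := List.append_of_mem hz
  exact h.split.2.reflTransGen

lemma reflTransGen_head_mem (h : IsWalk r a b l) (hz : z ∈ l) : ReflTransGen r a z := by
  obtain ⟨l₁, l₂, rfl⟩ := List.append_of_mem hz
  exact h.split.1.reflTransGen

lemma exists_shorter_of_not_nodup (h : IsWalk r a b l) (hl : ¬ l.Nodup) :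
    ∃ l', IsWalk r a b l' ∧ l'.length < l.length := by
  obtain ⟨z, hz⟩ := not_forall_not.mp (List.nodup_iff_sublist.not.mp hl)
  obtain ⟨s, t, rfl, hzs, hzt⟩ := List.cons_sublist_iff.mp hz
  obtain ⟨s₁, s₂, rfl⟩ := List.append_of_mem hzs
  obtain ⟨t₁, t₂, rfl⟩ := List.append_of_mem (List.singleton_sublist.mp hzt)
  have h₁ := (List.append_assoc _ _ _ ▸ h).split.1
  have h₂ := (show s₁ ++ z :: s₂ ++ (t₁ ++ z :: t₂) = (s₁ ++ z :: s₂ ++ t₁) ++ z :: t₂ by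
    simp) ▸ h
  refine ⟨_, h₁.append h₂.split.2, ?_⟩
  simp only [List.append_assoc, List.length_append, List.length_cons, List.tail_cons,
    List.length_nil]
  omega

lemma exists_nodup_first_mem {O : Set V} (h : IsWalk r a b l) (hb : b ∈ O) :
    ∃ m ∈ O, ∃ l', IsWalk r a m l' ∧ l'.Nodup ∧ ∀ z ∈ l', z ∈ O → z = m := by
  classical
  have hex : ∃ n, ∃ m ∈ O, ∃ l', IsWalk r a m l' ∧ l'.length = n := ⟨_, b, hb, l, h, rfl⟩
  obtain ⟨m, hm, l', h', hlen⟩ := Nat.find_spec hex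
  have hmin : ∀ m ∈ O, ∀ l'', IsWalk r a m l'' → l'.length ≤ l''.length :=
    fun m hm l'' h'' => by rw [hlen]; exact Nat.find_min' hex ⟨m, hm, l'', h'', rfl⟩
  refine ⟨m, hm, l', h', ?_, fun z hz hzO => ?_⟩
  · by_contra hnd
    obtain ⟨l'', h'', hlt⟩ := h'.exists_shorter_of_not_nodup hnd
    exact absurd (hmin m hm l'' h'') (not_le.mpr hlt)
  · obtain ⟨l₁, l₂, rfl⟩ := List.append_of_mem hz
    have := hmin z hzO _ h'.split.1
    simp only [List.length_append, List.length_cons, List.length_nil] at this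
    obtain rfl : l₂ = [] := List.eq_nil_of_length_eq_zero (by omega)
    simpa using h'.2.2

lemma exists_nodup (h : IsWalk r a b l) : ∃ l', IsWalk r a b l' ∧ l'.Nodup := by
  obtain ⟨_, rfl, l', h', hnd, -⟩ := h.exists_nodup_first_mem (O := {b}) rfl
  exact ⟨l', h', hnd⟩

lemma stepsLe (h : IsWalk r a b l) {n : ℕ} (hn : l.length ≤ n + 1) : StepsLe r n a b := by
  induction n generalizing a l with
  | zero =>
    obtain ⟨c, rfl⟩ := List.length_eq_one_iff.mp (le_antisymm hn h.length_pos)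
    obtain ⟨rfl, rfl⟩ := isWalk_singleton.mp h
    rfl
  | succ n ih =>
    obtain ⟨hc, ha, hb⟩ := h
    match l, ha with
    | [_], rfl => exact (Option.some_inj.mp hb) ▸ stepsLe_refl r a _
    | _ :: c :: t, rfl =>
      rw [List.isChain_cons_cons] at hc
      exact Or.inr ⟨c, hc.1, ih ⟨hc.2, rfl, by simpa using hb⟩ (by simpa using hn)⟩

lemma mem_of_stepIn_of_head_mem (h : IsWalk (StepIn A S) a b l) (ha : a ∈ S) (hz : z ∈ l) :
    z ∈ S :=
  h.1.induction (· ∈ S) l (fun _ _ hxy _ => hxy.2.1)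
    (fun hne => (List.head?_eq_some_head hne ▸ h.2.1 |> Option.some_inj.mp) ▸ ha) z hz

lemma mem_of_stepIn_of_last_mem (h : IsWalk (StepIn A S) a b l) (hb : b ∈ S) (hz : z ∈ l) :
    z ∈ S :=
  h.1.backwards_induction (· ∈ S) l (fun _ _ hxy _ => hxy.1)
    (fun hne => (List.getLast?_eq_some_getLast hne ▸ h.2.2 |> Option.some_inj.mp) ▸ hb) z hz

lemma stepIn_of_forall_mem (h : IsWalk (StepIn A S) a b l) (hU : ∀ y ∈ l, y ∈ U) :
    IsWalk (StepIn A U) a b l :=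
  h.imp_of_mem fun x y hx hy hxy => ⟨hU x hx, hU y hy, hxy.2.2⟩

end IsWalk

structure IsFork (r : V → V → Prop) (j : V) (Y : Set V) (u w : V) (P Q : List V) : Prop where
  left : IsWalk r u j P
  right : IsWalk r u w Q
  mem : w ∈ Y

def IsMinimalFork (r : V → V → Prop) (j : V) (Y : Set V) (u w : V) (P Q : List V) : Prop :=
  IsFork r j Y u w P Q ∧ ∀ u' w' P' Q', IsFork r j Y u' w' P' Q' →
    P.length + Q.length ≤ P'.length + Q'.length

/-- With `K : i ⇝ w` (undirected), `Q : u ⇝ w` and `P : u ⇝ j`, this lists the vertices of the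
cycle `i ⇝ w ⇜ u ⇝ j → i`; each `tail` drops the vertex shared with the preceding piece. -/
def forkCycle (K P Q : List V) : List V := K ++ Q.reverse.tail ++ P.tail

namespace IsFork

variable {A r s : V → V → Prop} {T Y : Set V} {i j m u w z : V} {K P Q : List V}

lemma exists_isMinimalFork (h : IsFork r j Y u w P Q) :
    ∃ u w P Q, IsMinimalFork r j Y u w P Q := by
  classical
  have hex : ∃ n u w P Q, IsFork r j Y u w P Q ∧ P.length + Q.length = n :=
    ⟨_, u, w, P, Q, h, rfl⟩
  obtain ⟨u, w, P, Q, hF, hn⟩ := Nat.find_spec hex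
  exact ⟨u, w, P, Q, hF, fun u' w' P' Q' hF' => by
    rw [hn]; exact Nat.find_min' hex ⟨u', w', P', Q', hF', rfl⟩⟩

lemma add_three_le_length {x : ℕ} (hcp : CyclePart A {j} Y i x)
    (h : IsFork (StepIn A {i}ᶜ) j Y u w P Q) (hu : u ∈ ({i}ᶜ : Set V)) :
    x + 3 ≤ P.length + Q.length := by
  by_contra! hlt
  have hP := h.left.length_pos
  have hQ := h.right.length_pos
  have hdisj := hcp (P.length - 1) (x - (P.length - 1)) (by omega)
  exact Set.eq_empty_iff_forall_notMem.mp hdisj u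
    ⟨⟨j, rfl, hu, h.left.stepsLe (by omega)⟩, ⟨w, h.mem, hu, h.right.stepsLe (by omega)⟩⟩

lemma mem_forkCycle (h : IsFork r j Y u w P Q) (hK : IsWalk s i w K) :
    z ∈ forkCycle K P Q ↔ z ∈ K ∨ z ∈ Q ∨ z ∈ P := by
  have hKQ : ∀ z, z ∈ K ++ Q.reverse.tail ↔ z ∈ K ∨ z ∈ Q := fun z => by
    rw [List.mem_append_tail_iff (by simpa using h.right.2.2) hK.last_mem, List.mem_reverse]
  rw [forkCycle, List.mem_append_tail_iff h.left.2.1 ((hKQ u).mpr (Or.inr h.right.head_mem)),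
    hKQ, or_assoc]

lemma isWalk_forkCycle (h : IsFork (StepIn A T) j Y u w P Q) (hK : IsWalk (SymmGen A) i w K) :
    IsWalk (SymmGen A) i j (forkCycle K P Q) :=
  (hK.append (h.right.reverse.imp_of_mem fun _ _ _ _ hxy => Or.inr hxy.2.2)).append
    (h.left.imp_of_mem fun _ _ _ _ hxy => Or.inl hxy.2.2)

lemma length_le_forkCycle (h : IsFork r j Y u w P Q) (hK : IsWalk s i w K) (hiw : i ≠ w) :
    P.length + Q.length ≤ (forkCycle K P Q).length := by
  have := hK.two_le_length hiw
  have := h.left.length_pos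
  have := h.right.length_pos
  simp only [forkCycle, List.length_append, List.length_tail, List.length_reverse]
  omega

lemma reflTransGen_forkCycle (h : IsFork (StepIn A T) j Y u w P Q) (hji : A j i)
    (hK : IsWalk s i w K) (hsink : ∀ z ∈ K, ReflTransGen (StepIn A {y | y ∈ K}) z m)
    (hz : z ∈ forkCycle K P Q) :
    ReflTransGen (StepIn A {y | y ∈ forkCycle K P Q}) z m := by
  have hC := fun y => (h.mem_forkCycle (z := y) hK).mpr
  have hK' : ∀ z ∈ K, ReflTransGen (StepIn A {y | y ∈ forkCycle K P Q}) z m :=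
    fun z hz => reflTransGen_stepIn_mono (fun y hy => hC y (Or.inl hy)) (hsink z hz)
  rcases (h.mem_forkCycle hK).mp hz with hz | hz | hz
  · exact hK' z hz
  · have hQ := h.right.stepIn_of_forall_mem fun y hy => hC y (Or.inr (Or.inl hy))
    exact (hQ.reflTransGen_mem_last hz).trans (hK' w hK.last_mem)
  · have hP := h.left.stepIn_of_forall_mem fun y hy => hC y (Or.inr (Or.inr hy))
    have hji' : StepIn A {y | y ∈ forkCycle K P Q} j i :=
      ⟨hC j (Or.inr (Or.inr h.left.last_mem)), hC i (Or.inl hK.head_mem), hji⟩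
    exact ((hP.reflTransGen_mem_last hz).tail hji').trans (hK' i hK.head_mem)

end IsFork

namespace IsMinimalFork

variable {r : V → V → Prop} {Y : Set V} {j u w z : V} {K P Q : List V}

lemma nodup_left (h : IsMinimalFork r j Y u w P Q) : P.Nodup := by
  by_contra hnd
  obtain ⟨P', hP', hlt⟩ := h.1.left.exists_shorter_of_not_nodup hnd
  have := h.2 u w P' Q ⟨hP', h.1.right, h.1.mem⟩
  omega

lemma nodup_right (h : IsMinimalFork r j Y u w P Q) : Q.Nodup := by
  by_contra hnd
  obtain ⟨Q', hQ', hlt⟩ := h.1.right.exists_shorter_of_not_nodup hnd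
  have := h.2 u w P Q' ⟨h.1.left, hQ', h.1.mem⟩
  omega

lemma eq_of_mem_left_of_mem_right (h : IsMinimalFork r j Y u w P Q) (hzP : z ∈ P)
    (hzQ : z ∈ Q) : z = u := by
  obtain ⟨P₁, P₂, rfl⟩ := List.append_of_mem hzP
  obtain ⟨Q₁, Q₂, rfl⟩ := List.append_of_mem hzQ
  have := h.2 z w _ _ ⟨h.1.left.split.2, h.1.right.split.2, h.1.mem⟩
  simp only [List.length_append, List.length_cons] at this
  obtain rfl : P₁ = [] := List.eq_nil_of_length_eq_zero (by omega)
  exact (isWalk_singleton.mp h.1.left.split.1).1.symm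

lemma eq_of_mem_right (h : IsMinimalFork r j Y u w P Q) (hzQ : z ∈ Q) (hzY : z ∈ Y) :
    z = w := by
  obtain ⟨Q₁, Q₂, rfl⟩ := List.append_of_mem hzQ
  have := h.2 u z P _ ⟨h.1.left, h.1.right.split.1, hzY⟩
  simp only [List.length_append, List.length_cons, List.length_nil] at this
  obtain rfl : Q₂ = [] := List.eq_nil_of_length_eq_zero (by omega)
  simpa using h.1.right.2.2

lemma eq_of_mem_left (h : IsMinimalFork r j Y u w P Q) (hzP : z ∈ P) (hzY : z ∈ Y) :
    z = u := by
  obtain ⟨P₁, P₂, rfl⟩ := List.append_of_mem hzP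
  have := h.2 z z _ [z] ⟨h.1.left.split.2, isWalk_singleton.mpr ⟨rfl, rfl⟩, hzY⟩
  have := h.1.right.length_pos
  simp only [List.length_append, List.length_cons, List.length_nil] at *
  obtain rfl : P₁ = [] := List.eq_nil_of_length_eq_zero (by omega)
  exact (isWalk_singleton.mp h.1.left.split.1).1.symm

lemma nodup_forkCycle (h : IsMinimalFork r j Y u w P Q) (hKnd : K.Nodup)
    (hKY : ∀ z ∈ K, z ∈ P ∨ z ∈ Q → z ∈ Y) : (forkCycle K P Q).Nodup := by
  refine List.nodup_append_tail (List.nodup_append_tail hKnd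
    (List.nodup_reverse.mpr h.nodup_right) (by simpa using h.1.right.2.2) ?_) h.nodup_left
    h.1.left.2.1 ?_
  · intro z hzK hzQ
    rw [List.mem_reverse] at hzQ
    exact h.eq_of_mem_right hzQ (hKY z hzK (Or.inr hzQ))
  · intro z hz hzP
    rcases List.mem_append.mp hz with hzK | hzQ
    · exact h.eq_of_mem_left hzP (hKY z hzK (Or.inl hzP))
    · exact h.eq_of_mem_left_of_mem_right hzP (List.mem_reverse.mp (List.mem_of_mem_tail hzQ))

end IsMinimalFork

section UnderlyingGraph

variable {A : V → V → Prop} {S : Set V} {l : List V}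

lemma UStep.symm {u v : V} (h : UStep A S u v) : UStep A S v u :=
  ⟨h.2.1, h.1, h.2.2.1.symm, h.2.2.2.symm⟩

lemma List.IsChain.uStep (hl : l.IsChain (SymmGen A)) (hnd : l.Nodup) (hS : ∀ y ∈ l, y ∈ S) :
    l.IsChain (UStep A S) := by
  rw [List.isChain_iff_getElem] at hl ⊢
  exact fun n hn => ⟨hS _ (List.getElem_mem _), hS _ (List.getElem_mem _),
    fun h => by simp [hnd.getElem_inj_iff] at h, hl n hn⟩

lemma uConnected_of_isChain (hl : l.IsChain (UStep A S)) (hne : l ≠ [])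
    (hS : ∀ y, y ∈ S ↔ y ∈ l) : UConnected A S := by
  have key : ∀ y ∈ l, ReflTransGen (UStep A S) (l.head hne) y ∧
      ReflTransGen (UStep A S) y (l.head hne) :=
    hl.induction _ l (fun _ _ hxy h => ⟨h.1.tail hxy, h.2.head hxy.symm⟩)
      (fun _ => ⟨.refl, .refl⟩)
  exact ⟨⟨_, (hS _).mpr (List.head_mem hne)⟩,
    fun a ha b hb => (key a ((hS a).mp ha)).2.trans (key b ((hS b).mp hb)).1⟩

lemma biconnected_of_cycle {C : List V} {a b : V} (hC : IsWalk (SymmGen A) a b C)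
    (hnd : C.Nodup) (hlen : 3 ≤ C.length) (hba : SymmGen A b a) : Biconnected A {y | y ∈ C} := by
  refine ⟨?_, uConnected_of_isChain (hC.1.uStep hnd fun _ => id) hC.ne_nil fun _ => Iff.rfl,
    fun v hv => ?_⟩
  · rwa [hnd.ncard_setOf_mem]
  obtain ⟨C₁, C₂, rfl⟩ := List.append_of_mem hv
  have hv' := List.nodup_middle.mp hnd
  rw [List.nodup_cons] at hv'
  have hnd' : (C₂ ++ C₁).Nodup := List.perm_append_comm.nodup_iff.mp hv'.2
  obtain ⟨hc₁, hc₂, -⟩ := List.isChain_append.mp hC.1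
  have hchain : (C₂ ++ C₁).IsChain (SymmGen A) := by
    refine hc₂.tail.append hc₁ fun x hx y hy => ?_
    have hxb : x = b := by
      have hx' : C₂.getLast? = some x := hx
      simpa [List.getLast?_append, List.getLast?_cons, hx'] using hC.2.2
    have hya : y = a := by simpa [List.head?_append, Option.mem_def.mp hy] using hC.2.1
    exact hxb ▸ hya ▸ hba
  have hmem : ∀ y, y ∈ {y | y ∈ C₁ ++ v :: C₂} \ {v} ↔ y ∈ C₂ ++ C₁ := by
    simp only [Set.mem_sdiff, Set.mem_ofPred_eq, Set.mem_singleton_iff, List.mem_append,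
      List.mem_cons] at hv' ⊢
    grind
  refine uConnected_of_isChain (hchain.uStep hnd' fun y => (hmem y).mpr) ?_ hmem
  exact List.ne_nil_of_length_pos (by
    simp only [List.length_append, List.length_cons] at hlen ⊢; omega)

end UnderlyingGraph

lemma exists_isWalk_symmGen_with_sink {A : V → V → Prop} {W : Set V} {i w a : V}
    (hi : ReachIn A W i a) (hw : ReachIn A W w a) :
    ∃ K m, IsWalk (SymmGen A) i w K ∧ K.Nodup ∧ (∀ z ∈ K, z ∈ W) ∧ m ∈ K ∧
      ∀ z ∈ K, ReflTransGen (StepIn A {y | y ∈ K}) z m := by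
  obtain ⟨R₀, hR₀⟩ := hw.2.exists_isWalk
  obtain ⟨m, him, R, hR, hRnd, hRfirst⟩ :=
    hR₀.exists_nodup_first_mem (O := {z | ReflTransGen (StepIn A W) i z}) hi.2
  obtain ⟨S₀, hS₀⟩ := him.exists_isWalk
  obtain ⟨S, hS, hSnd⟩ := hS₀.exists_nodup
  have hK : ∀ z, z ∈ S ++ R.reverse.tail ↔ z ∈ S ∨ z ∈ R := fun z => by
    rw [List.mem_append_tail_iff (by simpa using hR.2.2) hS.last_mem, List.mem_reverse]
  refine ⟨S ++ R.reverse.tail, m, ?_, ?_, fun z hz => ?_, (hK m).mpr (Or.inl hS.last_mem),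
    fun z hz => ?_⟩
  · exact (hS.imp_of_mem fun _ _ _ _ hxy => Or.inl hxy.2.2).append
      (hR.reverse.imp_of_mem fun _ _ _ _ hxy => Or.inr hxy.2.2)
  · refine List.nodup_append_tail hSnd (List.nodup_reverse.mpr hRnd) (by simpa using hR.2.2)
      fun z hzS hzR => hRfirst z (List.mem_reverse.mp hzR) (hS.reflTransGen_head_mem hzS)
  · exact ((hK z).mp hz).elim (hS.mem_of_stepIn_of_head_mem hi.1)
      (hR.mem_of_stepIn_of_head_mem hw.1)
  · rcases (hK z).mp hz with hz | hz
    · exact (hS.stepIn_of_forall_mem fun y hy => (hK y).mpr (Or.inl hy)).reflTransGen_mem_last hz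
    · exact (hR.stepIn_of_forall_mem fun y hy => (hK y).mpr (Or.inr hy)).reflTransGen_mem_last hz

lemma exists_isFork_of_not_dynPart {A : V → V → Prop} {Y : Set V} {i j : V}
    (hnd : ¬ DynPart A {j} Y {i}) : ∃ u w P Q, IsFork (StepIn A {i}ᶜ) j Y u w P Q := by
  obtain ⟨u, ⟨_, rfl, hP⟩, ⟨w, hw, hQ⟩⟩ := Set.nonempty_iff_ne_empty.mpr hnd
  obtain ⟨P, hP⟩ := hP.2.exists_isWalk
  obtain ⟨Q, hQ⟩ := hQ.2.exists_isWalk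
  exact ⟨u, w, P, Q, hP, hQ, hw⟩

theorem stmt14_general (A : V → V → Prop)
    (W : Set V)
    (hreach : ∃ a ∈ W, ∀ b ∈ W, ReachIn A W b a)
    (i : V) (hiW : i ∈ W) (j : V) (hjW : j ∉ W) (hji : A j i) (x : ℕ)
    (hcp : CyclePart A {j} (W \ {i}) i x)
    (hnd : ¬ DynPart A {j} (W \ {i}) {i}) :
    ∃ U : Set V, i ∈ U ∧ j ∈ U ∧ (U ∩ (W \ {i})).Nonempty ∧ x + 3 ≤ U.ncard ∧
      DirectedSubBlock A U := by
  obtain ⟨_, _, _, _, hF₀⟩ := exists_isFork_of_not_dynPart hnd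
  obtain ⟨u, w, P, Q, hF⟩ := hF₀.exists_isMinimalFork
  have hj : j ∈ ({i}ᶜ : Set V) := fun h => hjW (h ▸ hiW)
  have hPQ : ∀ z, z ∈ P ∨ z ∈ Q → z ∈ ({i}ᶜ : Set V) := fun z hz =>
    hz.elim (hF.1.left.mem_of_stepIn_of_last_mem hj)
      (hF.1.right.mem_of_stepIn_of_last_mem hF.1.mem.2)
  have hlen := hF.1.add_three_le_length hcp (hPQ u (Or.inl hF.1.left.head_mem))
  obtain ⟨a, -, ha⟩ := hreach
  obtain ⟨K, m, hK, hKnd, hKW, hmK, hsink⟩ :=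
    exists_isWalk_symmGen_with_sink (ha i hiW) (ha w hF.1.mem.1)
  have hC := hF.1.isWalk_forkCycle hK
  have hCnd := hF.nodup_forkCycle hKnd fun z hzK hz => ⟨hKW z hzK, hPQ z hz⟩
  have hClen := hF.1.length_le_forkCycle hK fun h => hF.1.mem.2 h.symm
  have hCmem := fun z => (hF.1.mem_forkCycle (z := z) hK).mpr
  refine ⟨{y | y ∈ forkCycle K P Q}, hC.head_mem, hC.last_mem,
    ⟨w, hCmem w (Or.inl hK.last_mem), hF.1.mem⟩, by rw [hCnd.ncard_setOf_mem]; omega,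
    ⟨m, hCmem m (Or.inl hmK), fun z hz => ⟨hz, hF.1.reflTransGen_forkCycle hji hK hsink hz⟩⟩,
    biconnected_of_cycle hC hCnd (by omega) (Or.inl hji)⟩

/-- sub-claim in the proof of Theorem B.1. -/
theorem stmt14 [Fintype V] (A : V → V → Prop) (hirr : ∀ v : V, ¬ A v v)
    (W : Set V) (hWcard : 2 ≤ W.ncard)
    (hreach : ∃ a ∈ W, ∀ b ∈ W, ReachIn A W b a)
    (i : V) (hiW : i ∈ W) (j : V) (hjW : j ∉ W) (hji : A j i) (x : ℕ)
    (hcp : CyclePart A {j} (W \ {i}) i x)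
    (hnd : ¬ DynPart A {j} (W \ {i}) {i}) :
    ∃ U : Set V, i ∈ U ∧ j ∈ U ∧ (U ∩ (W \ {i})).Nonempty ∧ x + 3 ≤ U.ncard ∧
      DirectedSubBlock A U :=
  stmt14_general A W hreach i hiW j hjW hji x hcp hnd
end

section
/- (Theorem B.1 of the paper, combinatorial form.) Suppose D contains at least one directed sub-block and every directed sub-block of D has at most n vertices, where n ≥ 3. Then for every x ∈ ℕ with x ≥ n − 2 and every W ⊆ V with |W| ≥ 3: W is x-generable if and only if W can be generated from a connected pair (by exact generation steps). -/
open Set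

variable {V : Type*}

/-!
A cycle generation step is an exact one, since bounded reachability implies reachability.
Conversely, every set generated from a connected pair has a sink, a vertex reachable from all
of its vertices. Let an exact step add `k` with the arc `k → j`, and take directed walks that
avoid `j`, start at a common root and end at `k` and in `W`, with minimal total length. Take
also directed walks inside `W`, from `j` and from the end of the second walk to a common apex,
again with minimal total length. By minimality the four walks are paths that meet only at their
ends, so together with the arc `k → j` they form a cycle of the underlying graph. Every vertex of
this cycle reaches the apex, so it is a directed sub-block, of length at most `n`. The join
contributes at least one arc, so the walks from the root have total length at most
`n - 2 ≤ x`, and thus `j` is not cycle-partitioning at order `x`.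
-/

open SimpleGraph

section StepsLe
variable {r : V → V → Prop}

lemma StepsLe.succ {n : ℕ} {u v : V} (h : StepsLe r n u v) : StepsLe r (n + 1) u v := by
  induction n generalizing u with
  | zero => exact Or.inl h
  | succ n ih =>
    rcases h with rfl | ⟨w, hw, hs⟩
    · exact Or.inl rfl
    · exact Or.inr ⟨w, hw, ih hs⟩

lemma StepsLe.mono {m n : ℕ} (h : m ≤ n) {u v : V} (hs : StepsLe r m u v) :
    StepsLe r n u v := by
  induction n, h using Nat.le_induction with
  | base => exact hs
  | succ n _ ih => exact ih.succ

lemma StepsLe.reflTransGen {n : ℕ} {u v : V} (h : StepsLe r n u v) :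
    Relation.ReflTransGen r u v := by
  induction n generalizing u with
  | zero => cases h; rfl
  | succ n ih =>
    rcases h with rfl | ⟨w, hw, hs⟩
    · rfl
    · exact .head hw (ih hs)

end StepsLe

lemma SimpleGraph.Walk.isPath_of_length_le_length_bypass [DecidableEq V] {G : SimpleGraph V}
    {u v : V} {p : G.Walk u v} (h : p.length ≤ p.bypass.length) : p.IsPath :=
  p.bypass_eq_self_of_length_le_length_bypass h ▸ p.bypass_isPath

lemma SimpleGraph.Walk.IsPath.start_notMem_support_tail {G : SimpleGraph V} {u v : V}
    {p : G.Walk u v} (hp : p.IsPath) : u ∉ p.support.tail := by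
  have h := hp.support_nodup
  rw [← p.cons_tail_support, List.nodup_cons] at h
  exact h.1

lemma SimpleGraph.Walk.IsCycle.ncard_support {G : SimpleGraph V} {u : V} {c : G.Walk u u}
    (hc : c.IsCycle) : {w | w ∈ c.support}.ncard = c.length := by
  classical
  have hset : {w | w ∈ c.support} = ↑c.support.tail.toFinset := by
    ext w
    simp only [Set.mem_ofPred_eq, List.coe_toFinset]
    refine ⟨fun hw => ?_, List.mem_of_mem_tail⟩
    rcases List.mem_cons.1 (c.cons_tail_support ▸ hw) with rfl | h
    · exact Walk.end_mem_tail_support hc.not_nil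
    · exact h
  rw [hset, Set.ncard_coe_finset, List.toFinset_card_of_nodup hc.support_nodup]
  simp

lemma SimpleGraph.Walk.IsCycle.exists_walk_support_eq_diff {G : SimpleGraph V}
    {u v : V} {c : G.Walk u u} (hc : c.IsCycle) (hv : v ∈ c.support) :
    ∃ (a b : V) (q : G.Walk a b), {w | w ∈ q.support} = {w | w ∈ c.support} \ {v} := by
  classical
  have hc' := hc.rotate hv
  obtain ⟨x, h, p, hcp⟩ := Walk.not_nil_iff.1 hc'.not_nil
  rw [hcp, Walk.cons_isCycle_iff] at hc'
  have hp : ¬ p.Nil := fun hp => h.ne hp.eq.symm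
  have hsupp := Walk.support_dropLast_concat hp
  have hnd := hsupp ▸ hc'.1.support_nodup
  refine ⟨x, _, p.dropLast, Set.ext fun w => ?_⟩
  simp only [Set.mem_ofPred_eq, Set.mem_sdiff, Set.mem_singleton_iff,
    ← c.mem_support_rotate_iff v hv, hcp, Walk.support_cons, List.mem_cons]
  constructor
  · intro hw
    refine ⟨.inr (hsupp ▸ List.mem_append_left _ hw), fun hwv => ?_⟩
    exact List.disjoint_of_nodup_append hnd hw (by simp [hwv])
  · rintro ⟨rfl | hw, hwv⟩
    · exact absurd rfl hwv
    · rw [← hsupp] at hw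
      simpa [hwv] using hw

lemma List.nodup_append_of_separated {l₁ m₁ m₂ l₂ : List V} {W : Set V}
    (hl₁ : l₁.Nodup) (hm₁ : m₁.Nodup) (hm₂ : m₂.Nodup) (hl₂ : l₂.Nodup)
    (hl₁W : ∀ v ∈ l₁, v ∉ W) (hm₁W : ∀ v ∈ m₁, v ∈ W) (hm₂W : ∀ v ∈ m₂, v ∈ W)
    (hl₂W : ∀ v ∈ l₂, v ∉ W) (hl : ∀ v ∈ l₁, v ∉ l₂) (hm : ∀ v ∈ m₁, v ∉ m₂) :
    (l₁ ++ m₁ ++ (m₂ ++ l₂)).Nodup := by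
  simp only [List.nodup_append, List.mem_append]
  grind

def IsDirectedWalk (A : V → V → Prop) {u v : V} (p : (fromRel A).Walk u v) : Prop :=
  ∀ d ∈ p.darts, A d.fst d.snd

namespace IsDirectedWalk
variable {A : V → V → Prop} {u v w : V}

lemma nil : IsDirectedWalk A (Walk.nil : (fromRel A).Walk u u) := by
  simp [IsDirectedWalk]

lemma cons_iff {h : (fromRel A).Adj u v} {p : (fromRel A).Walk v w} :
    IsDirectedWalk A (.cons h p) ↔ A u v ∧ IsDirectedWalk A p := by
  simp [IsDirectedWalk]

lemma append {p : (fromRel A).Walk u v} {q : (fromRel A).Walk v w}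
    (hp : IsDirectedWalk A p) (hq : IsDirectedWalk A q) : IsDirectedWalk A (p.append q) := by
  intro d hd
  rw [Walk.darts_append, List.mem_append] at hd
  exact hd.elim (hp d) (hq d)

variable [DecidableEq V] {p : (fromRel A).Walk u v}

lemma takeUntil (hp : IsDirectedWalk A p) (hw : w ∈ p.support) :
    IsDirectedWalk A (p.takeUntil w hw) :=
  fun d hd => hp d (p.darts_takeUntil_subset_darts hw hd)

lemma dropUntil (hp : IsDirectedWalk A p) (hw : w ∈ p.support) :
    IsDirectedWalk A (p.dropUntil w hw) :=
  fun d hd => hp d (p.darts_dropUntil_subset_darts hw hd)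

lemma bypass (hp : IsDirectedWalk A p) : IsDirectedWalk A p.bypass :=
  fun d hd => hp d (p.darts_bypass_subset_darts hd)

end IsDirectedWalk

section Reach
variable {A : V → V → Prop} {S : Set V}

lemma ReachIn.exists_isDirectedWalk {u v : V} (h : ReachIn A S u v) :
    ∃ p : (fromRel A).Walk u v, IsDirectedWalk A p ∧ ∀ w ∈ p.support, w ∈ S := by
  obtain ⟨hu, h⟩ := h
  induction h using Relation.ReflTransGen.head_induction_on with
  | refl => exact ⟨.nil, .nil, by simpa using hu⟩
  | @head u w hstep _ ih =>
    obtain ⟨p, hp, hpS⟩ := ih hstep.2.1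
    by_cases huw : u = w
    · subst huw; exact ⟨p, hp, hpS⟩
    · refine ⟨.cons ((fromRel_adj A u w).2 ⟨huw, .inl hstep.2.2⟩) p,
        IsDirectedWalk.cons_iff.2 ⟨hstep.2.2, hp⟩, ?_⟩
      simpa [hu] using hpS

lemma IsDirectedWalk.reachInLe {u v : V} {p : (fromRel A).Walk u v} (hp : IsDirectedWalk A p)
    (hpS : ∀ w ∈ p.support, w ∈ S) : ReachInLe A S p.length u v := by
  induction p with
  | nil => exact ⟨hpS _ (by simp), rfl⟩
  | cons h p ih =>
    rename_i u w _
    rw [IsDirectedWalk.cons_iff] at hp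
    have hwS : ∀ x ∈ p.support, x ∈ S := fun x hx => hpS x (by simp [hx])
    exact ⟨hpS u (by simp), .inr ⟨w, ⟨hpS u (by simp), hwS w p.start_mem_support, hp.1⟩,
      (ih hp.2 hwS).2⟩⟩

lemma IsDirectedWalk.reachIn {u v w : V} {p : (fromRel A).Walk u v}
    (hp : IsDirectedWalk A p) (hpS : ∀ x ∈ p.support, x ∈ S) (hw : w ∈ p.support) :
    ReachIn A S w v := by
  classical
  have h := (hp.dropUntil hw).reachInLe fun x hx => hpS x (p.support_dropUntil_subset_support hw hx)
  exact ⟨h.1, h.2.reflTransGen⟩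

lemma ReachIn.mono {S S' : Set V} (h : S ⊆ S') {u v : V} (hr : ReachIn A S u v) :
    ReachIn A S' u v :=
  ⟨h hr.1, Relation.ReflTransGen.mono (fun _ _ hs => ⟨h hs.1, h hs.2.1, hs.2.2⟩) _ _ hr.2⟩

end Reach

section Cycle
variable {A : V → V → Prop}

lemma reflTransGen_uStep_of_walk {S : Set V} {u v : V} (p : (fromRel A).Walk u v)
    (hpS : ∀ w ∈ p.support, w ∈ S) : Relation.ReflTransGen (UStep A S) u v := by
  induction p with
  | nil => rfl
  | cons h p ih =>
    rename_i u w _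
    have hwS : ∀ x ∈ p.support, x ∈ S := fun x hx => hpS x (by simp [hx])
    exact .head ⟨hpS u (by simp), hwS w p.start_mem_support, (fromRel_adj A u w).1 h⟩
      (ih hwS)

instance (S : Set V) : Std.Symm (UStep A S) :=
  ⟨fun _ _ ⟨h₁, h₂, hne, h⟩ => ⟨h₂, h₁, hne.symm, h.symm⟩⟩

lemma uConnected_support {u v : V} (p : (fromRel A).Walk u v) :
    UConnected A {w | w ∈ p.support} := by
  classical
  have hstart : ∀ w ∈ p.support, Relation.ReflTransGen (UStep A {w | w ∈ p.support}) u w :=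
    fun w hw => reflTransGen_uStep_of_walk (p.takeUntil w hw)
      fun x hx => p.support_takeUntil_subset_support hw hx
  exact ⟨⟨u, p.start_mem_support⟩, fun w hw x hx => (symm (hstart w hw)).trans (hstart x hx)⟩

lemma SimpleGraph.Walk.IsCycle.directedSubBlock {u t : V} {c : (fromRel A).Walk u u}
    (hc : c.IsCycle) (ht : t ∈ c.support)
    (hsink : ∀ w ∈ c.support, ReachIn A {w | w ∈ c.support} w t) :
    DirectedSubBlock A {w | w ∈ c.support} := by
  refine ⟨⟨t, ht, hsink⟩, hc.ncard_support ▸ hc.three_le_length, uConnected_support c,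
    fun v hv => ?_⟩
  obtain ⟨a, b, q, hq⟩ := hc.exists_walk_support_eq_diff hv
  exact hq ▸ uConnected_support q

end Cycle

/-- A witness that `j` does not dynamically partition `{k}` and `W \ {j}`. -/
structure Fork (A : V → V → Prop) (W : Set V) (j k : V) where
  root : V
  tip : V
  toK : (fromRel A).Walk root k
  toW : (fromRel A).Walk root tip
  tip_mem : tip ∈ W
  isDirectedWalk_toK : IsDirectedWalk A toK
  isDirectedWalk_toW : IsDirectedWalk A toW
  notMem_toK : j ∉ toK.support
  notMem_toW : j ∉ toW.support

namespace Fork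
variable {A : V → V → Prop} {W : Set V} {j k : V}

def length (F : Fork A W j k) : ℕ := F.toK.length + F.toW.length

def IsMin (F : Fork A W j k) : Prop := ∀ F' : Fork A W j k, F.length ≤ F'.length

lemma exists_isMin (F₀ : Fork A W j k) : ∃ F : Fork A W j k, F.IsMin :=
  have : Nonempty (Fork A W j k) := ⟨F₀⟩
  ⟨_, fun _ => Function.argmin_le length _⟩

lemma tip_ne (F : Fork A W j k) : F.tip ≠ j :=
  fun h => F.notMem_toW (h.subst (motive := (· ∈ F.toW.support)) F.toW.end_mem_support)

lemma one_le_length (F : Fork A W j k) (hkW : k ∉ W) : 1 ≤ F.length := by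
  by_contra h
  have hK := Walk.eq_of_length_eq_zero (p := F.toK) (by simp only [length] at h; omega)
  have hW := Walk.eq_of_length_eq_zero (p := F.toW) (by simp only [length] at h; omega)
  exact hkW (by rw [← hK, hW]; exact F.tip_mem)

variable {F : Fork A W j k} {v : V}

lemma IsMin.isPath_toK (hF : F.IsMin) : F.toK.IsPath := by
  classical
  apply Walk.isPath_of_length_le_length_bypass
  have := hF { F with
    toK := F.toK.bypass
    isDirectedWalk_toK := F.isDirectedWalk_toK.bypass
    notMem_toK := fun h => F.notMem_toK (F.toK.support_bypass_subset_support h) }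
  simp only [length] at this
  omega

lemma IsMin.isPath_toW (hF : F.IsMin) : F.toW.IsPath := by
  classical
  apply Walk.isPath_of_length_le_length_bypass
  have := hF { F with
    toW := F.toW.bypass
    isDirectedWalk_toW := F.isDirectedWalk_toW.bypass
    notMem_toW := fun h => F.notMem_toW (F.toW.support_bypass_subset_support h) }
  simp only [length] at this
  omega

lemma IsMin.eq_root_of_mem_toK_of_mem_toW (hF : F.IsMin) (hvK : v ∈ F.toK.support)
    (hvW : v ∈ F.toW.support) : v = F.root := by
  classical
  by_contra hv
  have := hF ⟨v, F.tip, F.toK.dropUntil v hvK, F.toW.dropUntil v hvW, F.tip_mem,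
    F.isDirectedWalk_toK.dropUntil hvK, F.isDirectedWalk_toW.dropUntil hvW,
    fun h => F.notMem_toK (F.toK.support_dropUntil_subset_support hvK h),
    fun h => F.notMem_toW (F.toW.support_dropUntil_subset_support hvW h)⟩
  have := Walk.length_dropUntil_lt_length hvK hv
  have := Walk.length_dropUntil_le_length F.toW hvW
  simp only [length] at *
  omega

lemma IsMin.eq_tip_of_mem_toW (hF : F.IsMin) (hv : v ∈ F.toW.support) (hvW : v ∈ W) :
    v = F.tip := by
  classical
  by_contra hne
  have := hF ⟨F.root, v, F.toK, F.toW.takeUntil v hv, hvW, F.isDirectedWalk_toK,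
    F.isDirectedWalk_toW.takeUntil hv, F.notMem_toK,
    fun h => F.notMem_toW (F.toW.support_takeUntil_subset_support hv h)⟩
  have := Walk.length_takeUntil_lt_length hv hne
  simp only [length] at *
  omega

lemma IsMin.eq_root_of_mem_toK (hF : F.IsMin) (hv : v ∈ F.toK.support) (hvW : v ∈ W) :
    v = F.root := by
  classical
  by_contra hne
  have hjv : j ≠ v := fun h => F.notMem_toK (h ▸ hv)
  have := hF ⟨v, v, F.toK.dropUntil v hv, .nil, hvW, F.isDirectedWalk_toK.dropUntil hv, .nil,
    fun h => F.notMem_toK (F.toK.support_dropUntil_subset_support hv h), by simpa using hjv⟩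
  have := Walk.length_dropUntil_lt_length hv hne
  simp only [length, Walk.length_nil] at *
  omega

end Fork

structure Join (A : V → V → Prop) (W : Set V) (a b : V) where
  apex : V
  fromA : (fromRel A).Walk a apex
  fromB : (fromRel A).Walk b apex
  isDirectedWalk_fromA : IsDirectedWalk A fromA
  isDirectedWalk_fromB : IsDirectedWalk A fromB
  support_fromA : ∀ w ∈ fromA.support, w ∈ W
  support_fromB : ∀ w ∈ fromB.support, w ∈ W

namespace Join
variable {A : V → V → Prop} {W : Set V} {a b : V}

def length (J : Join A W a b) : ℕ := J.fromA.length + J.fromB.length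

def IsMin (J : Join A W a b) : Prop := ∀ J' : Join A W a b, J.length ≤ J'.length

lemma exists_isMin (J₀ : Join A W a b) : ∃ J : Join A W a b, J.IsMin :=
  have : Nonempty (Join A W a b) := ⟨J₀⟩
  ⟨_, fun _ => Function.argmin_le length _⟩

lemma one_le_length (J : Join A W a b) (hab : a ≠ b) : 1 ≤ J.length := by
  by_contra h
  have hA := Walk.eq_of_length_eq_zero (p := J.fromA) (by simp only [length] at h; omega)
  have hB := Walk.eq_of_length_eq_zero (p := J.fromB) (by simp only [length] at h; omega)
  exact hab (hA.trans hB.symm)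

variable {J : Join A W a b} {v : V}

lemma IsMin.isPath_fromA (hJ : J.IsMin) : J.fromA.IsPath := by
  classical
  apply Walk.isPath_of_length_le_length_bypass
  have := hJ { J with
    fromA := J.fromA.bypass
    isDirectedWalk_fromA := J.isDirectedWalk_fromA.bypass
    support_fromA := fun w hw => J.support_fromA w (J.fromA.support_bypass_subset_support hw) }
  simp only [length] at this
  omega

lemma IsMin.isPath_fromB (hJ : J.IsMin) : J.fromB.IsPath := by
  classical
  apply Walk.isPath_of_length_le_length_bypass
  have := hJ { J with
    fromB := J.fromB.bypass
    isDirectedWalk_fromB := J.isDirectedWalk_fromB.bypass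
    support_fromB := fun w hw => J.support_fromB w (J.fromB.support_bypass_subset_support hw) }
  simp only [length] at this
  omega

lemma IsMin.eq_apex_of_mem (hJ : J.IsMin) (hvA : v ∈ J.fromA.support)
    (hvB : v ∈ J.fromB.support) : v = J.apex := by
  classical
  by_contra hv
  have := hJ ⟨v, J.fromA.takeUntil v hvA, J.fromB.takeUntil v hvB,
    J.isDirectedWalk_fromA.takeUntil hvA, J.isDirectedWalk_fromB.takeUntil hvB,
    fun w hw => J.support_fromA w (J.fromA.support_takeUntil_subset_support hvA hw),
    fun w hw => J.support_fromB w (J.fromB.support_takeUntil_subset_support hvB hw)⟩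
  have := Walk.length_takeUntil_lt_length hvA hv
  have := Walk.length_takeUntil_le_length J.fromB hvB
  simp only [length] at *
  omega

end Join

namespace Fork
variable {A : V → V → Prop} {W : Set V} {j k : V} (F : Fork A W j k) (J : Join A W j F.tip)
  (hadj : (fromRel A).Adj k j)

/-- `root → k → j → apex ← tip ← root`: the fork closed by the arc `k → j` and the join. -/
def cycle : (fromRel A).Walk F.root F.root :=
  (F.toK.append (.cons hadj J.fromA)).append (F.toW.append J.fromB).reverse

lemma length_cycle : (F.cycle J hadj).length = F.length + J.length + 1 := by
  simp only [cycle, Walk.length_append, Walk.length_cons, Walk.length_reverse, length,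
    Join.length]
  omega

lemma reachIn_cycle (hkj : A k j) {w : V} (hw : w ∈ (F.cycle J hadj).support) :
    ReachIn A {w | w ∈ (F.cycle J hadj).support} w J.apex := by
  have hK : IsDirectedWalk A (F.toK.append (.cons hadj J.fromA)) :=
    F.isDirectedWalk_toK.append (IsDirectedWalk.cons_iff.2 ⟨hkj, J.isDirectedWalk_fromA⟩)
  have hW : IsDirectedWalk A (F.toW.append J.fromB) :=
    F.isDirectedWalk_toW.append J.isDirectedWalk_fromB
  have hC : ∀ x, x ∈ (F.cycle J hadj).support ↔
      x ∈ (F.toK.append (.cons hadj J.fromA)).support ∨ x ∈ (F.toW.append J.fromB).support := by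
    intro x
    simp only [cycle, Walk.mem_support_append_iff, Walk.support_reverse, List.mem_reverse]
  rcases (hC w).1 hw with hw | hw
  · exact hK.reachIn (fun x hx => (hC x).2 (.inl hx)) hw
  · exact hW.reachIn (fun x hx => (hC x).2 (.inr hx)) hw

variable {F J}

lemma IsMin.isCycle_cycle (hF : F.IsMin) (hJ : J.IsMin) (hkW : k ∉ W) :
    (F.cycle J hadj).IsCycle := by
  have hlen := F.length_cycle J hadj
  have hF1 := F.one_le_length hkW
  have hJ1 := J.one_le_length F.tip_ne.symm
  have hnil : ¬ (F.cycle J hadj).Nil := by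
    rw [← Walk.length_eq_zero_iff]; omega
  rw [Walk.isCycle_iff_isPath_tail_and_le_length, Walk.isPath_def,
    Walk.support_tail_of_not_nil _ hnil]
  refine ⟨?_, by omega⟩
  simp only [cycle, Walk.tail_support_append, Walk.support_cons, List.tail_cons,
    Walk.reverse_append]
  have hK := hF.isPath_toK
  have hW := hF.isPath_toW.reverse
  have hB := hJ.isPath_fromB.reverse
  -- `toK` and `toW` meet `W` only at `root` and `tip`, while the join stays inside `W`.
  refine List.nodup_append_of_separated (W := W) hK.support_nodup.tail
    hJ.isPath_fromA.support_nodup hB.support_nodup.tail hW.support_nodup.tail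
    (fun v hv hvW => hK.start_notMem_support_tail
      (hF.eq_root_of_mem_toK (List.mem_of_mem_tail hv) hvW ▸ hv))
    J.support_fromA
    (fun v hv => J.support_fromB v (by simpa using List.mem_of_mem_tail hv))
    (fun v hv hvW => hW.start_notMem_support_tail
      (hF.eq_tip_of_mem_toW (by simpa using List.mem_of_mem_tail hv) hvW ▸ hv))
    (fun v hv hv' => hK.start_notMem_support_tail
      (hF.eq_root_of_mem_toK_of_mem_toW (List.mem_of_mem_tail hv)
        (by simpa using List.mem_of_mem_tail hv') ▸ hv))
    (fun v hv hv' => hB.start_notMem_support_tail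
      (hJ.eq_apex_of_mem hv (by simpa using List.mem_of_mem_tail hv') ▸ hv'))

lemma IsMin.length_add_two_le {n : ℕ}
    (hblocks : ∀ U : Set V, DirectedSubBlock A U → U.ncard ≤ n) (hF : F.IsMin) (hJ : J.IsMin) (hkW : k ∉ W)
    (hkj : A k j) : F.length + 2 ≤ n := by
  have hjW : j ∈ W := J.support_fromA j J.fromA.start_mem_support
  have hadj : (fromRel A).Adj k j := (fromRel_adj A k j).2 ⟨fun h => hkW (h ▸ hjW), .inl hkj⟩
  have hC := hF.isCycle_cycle hadj hJ hkW
  have hblock := hC.directedSubBlock (by simp [Fork.cycle])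
    fun w hw => F.reachIn_cycle J hadj hkj hw
  have := hblocks _ hblock
  rw [hC.ncard_support, F.length_cycle] at this
  have := J.one_le_length F.tip_ne.symm
  omega

end Fork

def HasSink (A : V → V → Prop) (W : Set V) : Prop :=
  ∃ s ∈ W, ∀ v ∈ W, ReachIn A W v s

section Generation
variable {A : V → V → Prop}

lemma inSetLe_subset_inSet (S : Set V) (a : ℕ) (X : Set V) : InSetLe A S a X ⊆ InSet A S X :=
  fun _ ⟨x, hx, hu, h⟩ => ⟨x, hx, hu, h.reflTransGen⟩

lemma DynPart.cyclePart {X Y : Set V} {i : V} (h : DynPart A X Y {i}) (x : ℕ) :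
    CyclePart A X Y i x :=
  fun _ _ _ => Set.eq_empty_of_subset_empty <| h ▸
    Set.inter_subset_inter (inSetLe_subset_inSet _ _ _) (inSetLe_subset_inSet _ _ _)

lemma CycleStep.exactStep {x : ℕ} {W W' : Set V} (h : CycleStep A x W W') : ExactStep A W W' :=
  let ⟨k, hkW, hW', j, hjW, hkj, hj⟩ := h
  ⟨k, hkW, hW', j, hjW, hkj, fun hD => hj (hD.cyclePart x)⟩

lemma ConnectedPair.hasSink {P : Set V} (h : ConnectedPair A P) : HasSink A P := by
  obtain ⟨i, j, -, rfl, harc⟩ := h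
  have hi : i ∈ ({i, j} : Set V) := .inl rfl
  have hj : j ∈ ({i, j} : Set V) := .inr rfl
  rcases harc with h | h
  · refine ⟨j, hj, ?_⟩
    rintro v (rfl | rfl)
    · exact ⟨hi, .single ⟨hi, hj, h⟩⟩
    · exact ⟨hj, .refl⟩
  · refine ⟨i, hi, ?_⟩
    rintro v (rfl | rfl)
    · exact ⟨hi, .refl⟩
    · exact ⟨hj, .single ⟨hj, hi, h⟩⟩

lemma ExactStep.hasSink {W W' : Set V} (hW : HasSink A W) (h : ExactStep A W W') :
    HasSink A W' := by
  obtain ⟨k, -, rfl, j, hjW, hkj, -⟩ := h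
  obtain ⟨s, hsW, hs⟩ := hW
  refine ⟨s, .inl hsW, ?_⟩
  rintro v (hv | rfl)
  · exact (hs v hv).mono Set.subset_union_left
  · exact ⟨.inr rfl, .head ⟨.inr rfl, .inl hjW, hkj⟩ ((hs j hjW).mono Set.subset_union_left).2⟩

lemma not_cyclePart_of_not_dynPart {n x : ℕ}
    (hblocks : ∀ U : Set V, DirectedSubBlock A U → U.ncard ≤ n) (hx : n - 2 ≤ x)
    {W : Set V} {j k : V} (hW : HasSink A W) (hjW : j ∈ W) (hkW : k ∉ W) (hkj : A k j)
    (hND : ¬ DynPart A {k} (W \ {j}) {j}) : ¬ CyclePart A {k} (W \ {j}) j x := by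
  obtain ⟨u, ⟨k', hk', hk⟩, y, hy, hy'⟩ := Set.nonempty_iff_ne_empty.2 hND
  rw [Set.mem_singleton_iff.1 hk'] at hk
  obtain ⟨σk, hσk, hσkS⟩ := hk.exists_isDirectedWalk
  obtain ⟨σy, hσy, hσyS⟩ := hy'.exists_isDirectedWalk
  obtain ⟨F, hF⟩ := Fork.exists_isMin
    ⟨u, y, σk, σy, hy.1, hσk, hσy, fun h => hσkS j h rfl, fun h => hσyS j h rfl⟩
  obtain ⟨s, -, hs⟩ := hW
  obtain ⟨ρj, hρj, hρjS⟩ := (hs j hjW).exists_isDirectedWalk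
  obtain ⟨ρt, hρt, hρtS⟩ := (hs F.tip F.tip_mem).exists_isDirectedWalk
  obtain ⟨J, hJ⟩ := Join.exists_isMin ⟨s, ρj, ρt, hρj, hρt, hρjS, hρtS⟩
  have hlen := hF.length_add_two_le hblocks hJ hkW hkj
  simp only [Fork.length] at hlen
  intro hCP
  refine (Set.eq_empty_iff_forall_notMem.1 <| hCP (x - F.toW.length) F.toW.length (by omega))
    F.root ⟨⟨k, rfl, ?_⟩, F.tip, ⟨F.tip_mem, F.tip_ne⟩, ?_⟩
  · have h := F.isDirectedWalk_toK.reachInLe (S := {j}ᶜ)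
      fun w hw hwj => F.notMem_toK (hwj ▸ hw)
    exact ⟨h.1, h.2.mono (by omega)⟩
  · exact F.isDirectedWalk_toW.reachInLe fun w hw hwj => F.notMem_toW (hwj ▸ hw)

lemma ExactStep.cycleStep {n x : ℕ} (hblocks : ∀ U : Set V, DirectedSubBlock A U → U.ncard ≤ n)
    (hx : n - 2 ≤ x) {W W' : Set V} (hW : HasSink A W) (h : ExactStep A W W') :
    CycleStep A x W W' :=
  let ⟨k, hkW, hW', j, hjW, hkj, hj⟩ := h
  ⟨k, hkW, hW', j, hjW, hkj, not_cyclePart_of_not_dynPart hblocks hx hW hjW hkW hkj hj⟩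

lemma reflTransGen_cycleStep_of_exactStep {n x : ℕ}
    (hblocks : ∀ U : Set V, DirectedSubBlock A U → U.ncard ≤ n) (hx : n - 2 ≤ x)
    {P W : Set V} (hP : HasSink A P) (h : Relation.ReflTransGen (ExactStep A) P W) :
    Relation.ReflTransGen (CycleStep A x) P W ∧ HasSink A W := by
  induction h with
  | refl => exact ⟨.refl, hP⟩
  | tail _ hstep ih => exact ⟨ih.1.tail (hstep.cycleStep hblocks hx ih.2), hstep.hasSink ih.2⟩

end Generation

theorem stmt15_general (A : V → V → Prop)
    (n : ℕ)
    (hblocks : ∀ U : Set V, DirectedSubBlock A U → U.ncard ≤ n)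
    (x : ℕ) (hx : n - 2 ≤ x) :
    ∀ W : Set V, 3 ≤ W.ncard → (XGenerable A x W ↔ GeneratedFromPair A W) := by
  intro W _
  constructor
  · rintro ⟨P, hP, hchain⟩
    exact ⟨P, hP, Relation.ReflTransGen.mono (fun _ _ => CycleStep.exactStep) _ _ hchain⟩
  · rintro ⟨P, hP, hchain⟩
    exact ⟨P, hP, (reflTransGen_cycleStep_of_exactStep hblocks hx hP.hasSink hchain).1⟩

/-- Theorem B.1, combinatorial form. -/
theorem stmt15 [Fintype V] (A : V → V → Prop) (hirr : ∀ v : V, ¬ A v v)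
    (n : ℕ) (hn : 3 ≤ n)
    (hex : ∃ X : Set V, DirectedSubBlock A X)
    (hblocks : ∀ U : Set V, DirectedSubBlock A U → U.ncard ≤ n)
    (x : ℕ) (hx : n - 2 ≤ x) :
    ∀ W : Set V, 3 ≤ W.ncard → (XGenerable A x W ↔ GeneratedFromPair A W) :=
  stmt15_general A n hblocks x hx
end
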